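/- For an even-dimensional antisymmetric matrix normalized by Tr(ω†ω) = 1/2 in the two-fermion two-site case (4×4), the fermionic concurrence 𝒞(ω) = 8|pf(ω)| satisfies 0 ≤ 𝒞(ω) ≤ 1, with 𝒞(ω) = 0 iff ω has rank ≤ 2 (Slater rank one). -/

import Mathlib

/-!
Writing the antisymmetric `ω` through its six upper entries `a, b, c, d, e, f`, the Pfaffian is
`a f - b e + c d` and `Tr(ω†ω) = 2 (|a|² + ⋯ + |f|²)`, so the bound `8 |pf ω| ≤ 1` is
`2 |a f - b e + c d| ≤ |a|² + ⋯ + |f|²`, i.e. the triangle inequality and AM-GM.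
For the rank, `ω` times its Hodge dual `ω̃` (again antisymmetric, with the same entries permuted
and up to sign) is `-pf ω • 1`. If `pf ω ≠ 0` then `ω` is invertible, of rank `4`. If `pf ω = 0`
then `ω ω̃ = 0`, so `rank ω + rank ω̃ ≤ 4`, and a nonzero antisymmetric matrix has rank at
least `2` because it has an invertible `2 × 2` principal minor `!![0, x; -x, 0]`.
-/

open Matrix

/-- The Pfaffian of a `2L × 2L` complex matrix,
`pf ω = (1/(2^L L!)) ∑_π sign(π) ∏_{j=1}^{L} ω_{π(2j−1), π(2j)}`. -/
noncomputable def pf (L : ℕ) (ω : Matrix (Fin (2 * L)) (Fin (2 * L)) ℂ) : ℂ :=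
  (1 / ((2 : ℂ) ^ L * (Nat.factorial L : ℂ))) *
    ∑ π : Equiv.Perm (Fin (2 * L)),
      ((Equiv.Perm.sign π : ℤ) : ℂ) *
        ∏ j : Fin L,
          ω (π ⟨2 * j.val, by have := j.isLt; omega⟩)
            (π ⟨2 * j.val + 1, by have := j.isLt; omega⟩)

open Equiv Perm

theorem Equiv.Perm.decomposeFin_symm_apply_two {n : ℕ} (e : Perm (Fin (n + 2)))
    (p : Fin (n + 3)) : decomposeFin.symm (p, e) 2 = swap 0 p (e 1).succ := by
  rw [← Fin.succ_one_eq_two, decomposeFin_symm_apply_succ]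

theorem Equiv.Perm.decomposeFin_symm_apply_three {n : ℕ} (e : Perm (Fin (n + 3)))
    (p : Fin (n + 4)) : decomposeFin.symm (p, e) 3 = swap 0 p (e 2).succ :=
  decomposeFin_symm_apply_succ e p 2

theorem Equiv.Perm.sum_fin_succ {M : Type*} [AddCommMonoid M] {n : ℕ}
    (F : Perm (Fin (n + 1)) → M) :
    ∑ π, F π = ∑ p, ∑ e, F (decomposeFin.symm (p, e)) := by
  rw [← decomposeFin.symm.sum_comp, Fintype.sum_prod_type]

namespace Matrix

variable {α : Type*}

def skew4 [Zero α] [Neg α] (a b c d e f : α) : Matrix (Fin 4) (Fin 4) α :=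
  !![0, a, b, c; -a, 0, d, e; -b, -d, 0, f; -c, -e, -f, 0]

section AddGroup

variable [AddGroup α]

theorem skew4_transpose (a b c d e f : α) : (skew4 a b c d e f)ᵀ = -skew4 a b c d e f := by
  ext i j
  fin_cases i <;> fin_cases j <;> simp [skew4]

theorem skew4_eq_zero_iff {a b c d e f : α} :
    skew4 a b c d e f = 0 ↔ a = 0 ∧ b = 0 ∧ c = 0 ∧ d = 0 ∧ e = 0 ∧ f = 0 := by
  simp only [skew4, ← ext_iff, of_apply, cons_val', cons_val_fin_one, zero_apply,
    Fin.forall_fin_succ, Fin.isValue, cons_val_zero, cons_val_succ, forall_const, true_and,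
    neg_eq_zero, and_true]
  tauto

variable [IsAddTorsionFree α]

theorem diag_eq_zero_of_transpose_eq_neg {n : Type*} {A : Matrix n n α} (hA : Aᵀ = -A) (i : n) :
    A i i = 0 :=
  self_eq_neg.mp (by simpa using congrFun (congrFun hA i) i)

theorem eq_skew4_of_transpose_eq_neg {A : Matrix (Fin 4) (Fin 4) α} (hA : Aᵀ = -A) :
    A = skew4 (A 0 1) (A 0 2) (A 0 3) (A 1 2) (A 1 3) (A 2 3) := by
  have hswap (i j : Fin 4) : A j i = -A i j := by simpa using congrFun (congrFun hA i) j
  ext i j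
  fin_cases i <;> fin_cases j <;>
    simp [skew4, diag_eq_zero_of_transpose_eq_neg hA, hswap 0, hswap 1 2, hswap 1 3, hswap 2 3]

end AddGroup

/-- The second factor is the Hodge dual `ω̃ᵢⱼ = ½ εᵢⱼₖₗ ωₖₗ` of `ω = skew4 a b c d e f`. -/
theorem skew4_mul_dual {R : Type*} [CommRing R] (a b c d e f : R) :
    skew4 a b c d e f * skew4 f (-e) d c (-b) a = -(a * f - b * e + c * d) • 1 := by
  ext i j
  fin_cases i <;> fin_cases j <;> simp [skew4, mul_apply, Fin.sum_univ_four] <;> ring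

section Field

variable {K : Type*} [Field K] [IsAddTorsionFree K]

theorem two_le_rank_of_transpose_eq_neg {n : Type*} [Fintype n] {A : Matrix n n K}
    (hA : Aᵀ = -A) (hA₀ : A ≠ 0) : 2 ≤ A.rank := by
  obtain ⟨i, j, hij⟩ : ∃ i j, A i j ≠ 0 := by
    by_contra! h
    exact hA₀ (ext h)
  have hminor : A.submatrix ![i, j] ![i, j] = !![0, A i j; -A i j, 0] := by
    have hji : A j i = -A i j := by simpa using congrFun (congrFun hA i) j
    ext k l
    fin_cases k <;> fin_cases l <;> simp [diag_eq_zero_of_transpose_eq_neg hA, hji]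
  have hunit : IsUnit (A.submatrix ![i, j] ![i, j]) := by
    rw [isUnit_iff_isUnit_det, hminor, det_fin_two_of, isUnit_iff_ne_zero]
    simpa using hij
  calc 2 = (A.submatrix ![i, j] ![i, j]).rank := by rw [rank_of_isUnit _ hunit, Fintype.card_fin]
    _ ≤ A.rank := rank_submatrix_le _ _ _

theorem rank_skew4_le_two_iff {a b c d e f : K} :
    (skew4 a b c d e f).rank ≤ 2 ↔ a * f - b * e + c * d = 0 := by
  have hdual := skew4_mul_dual a b c d e f
  set p := a * f - b * e + c * d
  constructor
  · intro hrank
    by_contra hp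
    have hunit : IsUnit (skew4 a b c d e f) := by
      rw [isUnit_iff_isUnit_det]
      refine isUnit_det_of_right_inverse (B := -p⁻¹ • skew4 f (-e) d c (-b) a) ?_
      rw [mul_smul_comm, hdual, smul_smul, neg_mul_neg, inv_mul_cancel₀ hp, one_smul]
    have hrank₄ := rank_of_isUnit _ hunit
    rw [Fintype.card_fin] at hrank₄
    omega
  · intro hp
    rcases eq_or_ne (skew4 a b c d e f) 0 with h0 | h0
    · simp [h0]
    have hdual₀ : skew4 f (-e) d c (-b) a ≠ 0 := by
      simp only [ne_eq, skew4_eq_zero_iff, neg_eq_zero] at h0 ⊢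
      tauto
    have hsum := rank_add_rank_le_card_of_mul_eq_zero (by rw [hdual, hp, neg_zero, zero_smul])
    have hdual₂ := two_le_rank_of_transpose_eq_neg (skew4_transpose _ _ _ _ _ _) hdual₀
    rw [Fintype.card_fin] at hsum
    omega

end Field

theorem trace_conjTranspose_mul_self_skew4 {𝕜 : Type*} [RCLike 𝕜] (a b c d e f : 𝕜) :
    ((skew4 a b c d e f)ᴴ * skew4 a b c d e f).trace
      = ((2 * (‖a‖ ^ 2 + ‖b‖ ^ 2 + ‖c‖ ^ 2 + ‖d‖ ^ 2 + ‖e‖ ^ 2 + ‖f‖ ^ 2) : ℝ) : 𝕜) := by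
  simp [trace, mul_apply, Fin.sum_univ_four, skew4, RCLike.conj_mul]
  push_cast
  ring

end Matrix

theorem norm_mul_sub_mul_add_mul_le {R : Type*} [SeminormedRing R] (a b c d e f : R) :
    2 * ‖a * f - b * e + c * d‖
      ≤ ‖a‖ ^ 2 + ‖b‖ ^ 2 + ‖c‖ ^ 2 + ‖d‖ ^ 2 + ‖e‖ ^ 2 + ‖f‖ ^ 2 := by
  have htri : ‖a * f - b * e + c * d‖ ≤ ‖a‖ * ‖f‖ + ‖b‖ * ‖e‖ + ‖c‖ * ‖d‖ :=
    calc ‖a * f - b * e + c * d‖ ≤ ‖a * f‖ + ‖b * e‖ + ‖c * d‖ :=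
          (norm_add_le _ _).trans (add_le_add_left (norm_sub_le _ _) _)
      _ ≤ ‖a‖ * ‖f‖ + ‖b‖ * ‖e‖ + ‖c‖ * ‖d‖ := by gcongr <;> exact norm_mul_le _ _
  nlinarith [two_mul_le_add_sq ‖a‖ ‖f‖, two_mul_le_add_sq ‖b‖ ‖e‖, two_mul_le_add_sq ‖c‖ ‖d‖]

theorem pf_skew4 (a b c d e f : ℂ) : pf 2 (skew4 a b c d e f) = a * f - b * e + c * d := by
  simp [pf, sum_fin_succ, Fin.sum_univ_succ, Fin.prod_univ_two, skew4, swap_apply_def,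
    decomposeFin_symm_apply_two, decomposeFin_symm_apply_three]
  ring

/-- For a 4×4 antisymmetric matrix `ω` (two fermions on two sites) normalized by
`Tr(ω†ω) = 1/2`, the fermionic concurrence `𝒞(ω) = 8|pf ω|` satisfies
`0 ≤ 𝒞(ω) ≤ 1`, and `𝒞(ω) = 0` if and only if `ω` has rank at most 2
(Slater rank one). -/
theorem fermionic_concurrence_bounds (ω : Matrix (Fin (2 * 2)) (Fin (2 * 2)) ℂ)
    (h : ωᵀ = -ω) (hnorm : (ωᴴ * ω).trace = 1 / 2) :
    0 ≤ 8 * ‖pf 2 ω‖ ∧ 8 * ‖pf 2 ω‖ ≤ 1 ∧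
      (8 * ‖pf 2 ω‖ = 0 ↔ ω.rank ≤ 2) := by
  rw [eq_skew4_of_transpose_eq_neg h] at hnorm ⊢
  set a := ω 0 1; set b := ω 0 2; set c := ω 0 3
  set d := ω 1 2; set e := ω 1 3; set f := ω 2 3
  have hsum : 2 * (‖a‖ ^ 2 + ‖b‖ ^ 2 + ‖c‖ ^ 2 + ‖d‖ ^ 2 + ‖e‖ ^ 2 + ‖f‖ ^ 2) = 1 / 2 := by
    rw [trace_conjTranspose_mul_self_skew4] at hnorm
    exact RCLike.ofReal_injective (K := ℂ) (by rw [hnorm]; norm_num)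
  rw [pf_skew4, rank_skew4_le_two_iff]
  refine ⟨by positivity, ?_, by simp⟩
  linarith [norm_mul_sub_mul_add_mul_le a b c d e f]
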